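/- Let N ≥ 5 be an odd integer. For integers l, m define ν_{l,m} = √(1 − (1/2)cos(4πl/N) − (1/2)cos(4πm/N)) + √(2 − (1/2)cos(4πl/N) − (1/2)cos(4πm/N)). Define p : (ℤ/N)³ → ℝ by p(a) = (1/(4N²)) Σ_{l=1}^{N−1} Σ_{m=0}^{N−1} tan(πl/N) · sin(2π(l a₁ + m a₂)/N) · (1/(ν² − ν^{−2})) · ( (ν^{ā₃} + ν^{N−ā₃})/(1 − ν^N) + ((−ν)^{ā₃} + (−ν)^{N−ā₃})/(1 + ν^N) ), where ν = ν_{l,m} and ā₃ ∈ {0,…,N−1} is the representative of a₃. Then p solves the Poisson problem: for all a ∈ (ℤ/N)³, (Δp)(a) = (1/2)(−1)^{ā₁−1} if ā₁ ≠ 0, ā₂ = 0 and ā₃ = 0, and (Δp)(a) = 0 otherwise, where āᵢ ∈ {0,…,N−1} denote the representatives of the coordinates of a. -/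

import Mathlib

/-!
Every summand of `p` is a separable mode `tan(πl/N) · sin(2π(l a₁ + m a₂)/N) · g(a₃) / (ν² - ν⁻²)`.
A shift by `±2` in `a₁` or `a₂` multiplies the plane wave by `2 cos(4πl/N)` or `2 cos(4πm/N)`, while
the vertical profile `g` satisfies `g(k + 2) + g(k - 2) = (ν² + ν⁻²) g(k) + 2 (ν² - ν⁻²) δ_{k,0}`
on `ℤ/N`. Since `ν² + ν⁻² = 6 - 2 cos(4πl/N) - 2 cos(4πm/N)`, the Laplacian of a mode is
`2 tan(πl/N) sin(2π(l a₁ + m a₂)/N) δ_{a₃,0}`.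

Summing over `m` leaves only `a₂ = 0`, by orthogonality of the characters of `ℤ/N`. The remaining
sums `A_j = Σ_l tan(πl/N) sin(2πlj/N)` satisfy
`A_j + A_{j+1} = Σ_l (cos(2πlj/N) - cos(2πl(j+1)/N))`, because `tan θ (sin(α - θ) + sin(α + θ)) = cos(α - θ) - cos(α + θ)`; the right side is `N` for
`j = 0` and `0` for `0 < j < N - 1`, so `A_j = N (-1)^(j-1)`. Oddness of `N` is what keeps
`cos(πl/N)` away from `0` and `ν` away from `1`.
-/

open Real

/-- The discrete Laplacian with shifts by `2` on functions on the periodic lattice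
`(ℤ/N)³`: `(Δp)(a) = Σ_{i=1}^{3} (p(a + 2eᵢ) + p(a - 2eᵢ)) - 6 p(a)`. -/
def discLap {R : Type*} [Ring R] (N : ℕ) (p : (Fin 3 → ZMod N) → R)
    (a : Fin 3 → ZMod N) : R :=
  (∑ i : Fin 3, (p (a + Pi.single i (2 : ZMod N)) + p (a - Pi.single i (2 : ZMod N)))) -
    6 * p a

/-- `ν_{l,m} = √(1 - cos(4πl/N)/2 - cos(4πm/N)/2) + √(2 - cos(4πl/N)/2 - cos(4πm/N)/2)`. -/
noncomputable def nuLM (N l m : ℕ) : ℝ :=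
  Real.sqrt (1 - (1 / 2) * Real.cos (4 * Real.pi * l / N) -
      (1 / 2) * Real.cos (4 * Real.pi * m / N)) +
    Real.sqrt (2 - (1 / 2) * Real.cos (4 * Real.pi * l / N) -
      (1 / 2) * Real.cos (4 * Real.pi * m / N))

open Finset ZMod

section Characters

variable {N : ℕ} [NeZero N]

lemma sum_range_natCast_zmod {M : Type*} [AddCommMonoid M] (f : ZMod N → M) :
    ∑ i ∈ range N, f i = ∑ z, f z :=
  Finset.sum_nbij' (fun i => (i : ZMod N)) (fun z => z.val) (by simp) (by simp [val_lt])
    (fun i hi => val_cast_of_lt (mem_range.1 hi)) (fun z _ => natCast_zmod_val z) (fun _ _ => rfl)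

lemma stdAddChar_natCast_eq_exp (n : ℕ) :
    stdAddChar (n : ZMod N) = Complex.exp ((2 * π * n / N : ℝ) * Complex.I) := by
  rw [← Int.cast_natCast, stdAddChar_coe]
  push_cast
  ring_nf

lemma re_stdAddChar_natCast (n : ℕ) : (stdAddChar (n : ZMod N)).re = cos (2 * π * n / N) := by
  rw [stdAddChar_natCast_eq_exp, Complex.exp_ofReal_mul_I_re]

lemma im_stdAddChar_natCast (n : ℕ) : (stdAddChar (n : ZMod N)).im = sin (2 * π * n / N) := by
  rw [stdAddChar_natCast_eq_exp, Complex.exp_ofReal_mul_I_im]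

lemma im_stdAddChar_add_add_im_stdAddChar_sub (u d : ZMod N) :
    (stdAddChar (u + d)).im + (stdAddChar (u - d)).im =
      2 * (stdAddChar d).re * (stdAddChar u).im := by
  rw [AddChar.map_add_eq_mul, sub_eq_add_neg, AddChar.map_add_eq_mul, AddChar.map_neg_eq_conj]
  simp only [Complex.mul_im, Complex.conj_re, Complex.conj_im]
  ring

lemma sum_range_stdAddChar_mul (y : ZMod N) :
    ∑ m ∈ range N, stdAddChar ((m : ZMod N) * y) = if y = 0 then (N : ℂ) else 0 := by
  rw [sum_range_natCast_zmod (fun z => stdAddChar (z * y)),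
    AddChar.sum_mulShift y (isPrimitive_stdAddChar N), ZMod.card]
  split_ifs <;> simp

lemma sum_range_cos (j : ℕ) :
    ∑ l ∈ range N, cos (2 * π * (l * j) / N) = if N ∣ j then (N : ℝ) else 0 := by
  have h := congrArg Complex.re (sum_range_stdAddChar_mul (j : ZMod N))
  simp only [Complex.re_sum, ← Nat.cast_mul, re_stdAddChar_natCast, natCast_eq_zero_iff] at h
  push_cast at h
  rw [h]
  split_ifs <;> simp

end Characters

section PlaneWaves

variable {N : ℕ}

noncomputable def planeWave (N l m : ℕ) (x y : ZMod N) : ℝ :=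
  sin (2 * π * (l * x.val + m * y.val) / N)

variable [NeZero N] (l m : ℕ)

lemma planeWave_eq_im_stdAddChar (x y : ZMod N) :
    planeWave N l m x y = (stdAddChar ((l : ZMod N) * x + (m : ZMod N) * y)).im := by
  have h := im_stdAddChar_natCast (N := N) (l * x.val + m * y.val)
  push_cast [natCast_zmod_val] at h
  rw [planeWave, h]

lemma planeWave_add_two_add_planeWave_sub_two_left (x y : ZMod N) :
    planeWave N l m (x + 2) y + planeWave N l m (x - 2) y =
      2 * cos (4 * π * l / N) * planeWave N l m x y := by
  have h := im_stdAddChar_add_add_im_stdAddChar_sub ((l : ZMod N) * x + (m : ZMod N) * y)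
    ((2 * l : ℕ) : ZMod N)
  rw [re_stdAddChar_natCast] at h
  simp only [planeWave_eq_im_stdAddChar]
  convert h using 4 <;> push_cast <;> ring

lemma planeWave_add_two_add_planeWave_sub_two_right (x y : ZMod N) :
    planeWave N l m x (y + 2) + planeWave N l m x (y - 2) =
      2 * cos (4 * π * m / N) * planeWave N l m x y := by
  have h := im_stdAddChar_add_add_im_stdAddChar_sub ((l : ZMod N) * x + (m : ZMod N) * y)
    ((2 * m : ℕ) : ZMod N)
  rw [re_stdAddChar_natCast] at h
  simp only [planeWave_eq_im_stdAddChar]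
  convert h using 4 <;> push_cast <;> ring

lemma sum_range_planeWave (x y : ZMod N) :
    ∑ m ∈ range N, planeWave N l m x y =
      if y = 0 then N * sin (2 * π * (l * x.val) / N) else 0 := by
  have h := congrArg (fun w => (stdAddChar ((l : ZMod N) * x) * w).im) (sum_range_stdAddChar_mul y)
  simp only [mul_sum, Complex.im_sum, ← AddChar.map_add_eq_mul] at h
  simp only [planeWave_eq_im_stdAddChar, h]
  split_ifs
  · have hx := im_stdAddChar_natCast (N := N) (l * x.val)
    push_cast [natCast_zmod_val] at hx
    simp only [Complex.mul_im, Complex.natCast_re, Complex.natCast_im, hx, mul_zero]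
    ring
  · simp

end PlaneWaves

section TangentSum

lemma tan_mul_sin_sub_add_sin_add {θ : ℝ} (hθ : cos θ ≠ 0) (α : ℝ) :
    tan θ * (sin (α - θ) + sin (α + θ)) = cos (α - θ) - cos (α + θ) := by
  rw [tan_eq_sin_div_cos, sin_sub, sin_add, cos_sub, cos_add]
  field_simp
  ring

variable {N : ℕ}

lemma cos_pi_mul_div_ne_zero (hN : Odd N) (l : ℕ) : cos (π * l / N) ≠ 0 := by
  rw [Ne, cos_eq_zero_iff]
  rintro ⟨k, hk⟩
  have hN0 : (N : ℝ) ≠ 0 := Nat.cast_ne_zero.2 hN.pos.ne'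
  have hR : ((2 * l : ℤ) : ℝ) = ((2 * k + 1) * N : ℤ) := by
    push_cast
    field_simp at hk
    linarith [pi_pos]
  have hZ : (2 * l : ℤ) = (2 * k + 1) * N := by exact_mod_cast hR
  have hodd : Odd ((2 * k + 1) * (N : ℤ)) := (odd_two_mul_add_one k).mul hN.natCast
  rw [← hZ] at hodd
  exact Int.not_even_iff_odd.2 hodd (even_two_mul _)

lemma sum_range_tan_mul_sin_add_succ (hN : Odd N) (j : ℕ) :
    ∑ l ∈ range N, tan (π * l / N) * sin (2 * π * (l * j) / N) +
        ∑ l ∈ range N, tan (π * l / N) * sin (2 * π * (l * (j + 1 : ℕ)) / N) =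
      ∑ l ∈ range N, cos (2 * π * (l * j) / N) -
        ∑ l ∈ range N, cos (2 * π * (l * (j + 1 : ℕ)) / N) := by
  rw [← sum_add_distrib, ← sum_sub_distrib]
  refine sum_congr rfl fun l _ => ?_
  have h₁ : 2 * π * (l * j) / N = (2 * j + 1) * π * l / N - π * l / N := by ring
  have h₂ : 2 * π * (l * (j + 1 : ℕ)) / N = (2 * j + 1) * π * l / N + π * l / N := by
    push_cast; ring
  rw [← mul_add, h₁, h₂]
  exact tan_mul_sin_sub_add_sin_add (cos_pi_mul_div_ne_zero hN l) _

lemma sum_range_tan_mul_sin (hN : Odd N) {j : ℕ} (hj : 0 < j) (hjN : j < N) :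
    ∑ l ∈ range N, tan (π * l / N) * sin (2 * π * (l * j) / N) = N * (-1) ^ (j - 1) := by
  have : NeZero N := ⟨hN.pos.ne'⟩
  induction j, hj using Nat.le_induction with
  | base =>
    have h := sum_range_tan_mul_sin_add_succ hN 0
    rw [sum_range_cos, sum_range_cos] at h
    simp_all [Nat.dvd_one, hjN.ne']
  | succ j hj ih =>
    have h := sum_range_tan_mul_sin_add_succ hN j
    rw [sum_range_cos, sum_range_cos, ih (by omega),
      if_neg (Nat.not_dvd_of_pos_of_lt hj (by omega)),
      if_neg (Nat.not_dvd_of_pos_of_lt (by omega) hjN)] at h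
    rw [show j + 1 - 1 = j - 1 + 1 by omega, pow_succ]
    linarith

lemma sum_Icc_tan_mul_sin (hN : Odd N) {j : ℕ} (hjN : j < N) :
    ∑ l ∈ Icc 1 (N - 1), tan (π * l / N) * sin (2 * π * (l * j) / N) =
      if j = 0 then 0 else (N : ℝ) * (-1) ^ (j - 1) := by
  split_ifs with hj
  · simp [hj]
  rw [← sum_range_tan_mul_sin hN (Nat.pos_of_ne_zero hj) hjN]
  refine sum_subset (fun l hl => by simp at hl ⊢; omega) fun l hl hl' => ?_
  obtain rfl : l = 0 := by simp at hl hl'; omega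
  simp

end TangentSum

section Nu

lemma one_lt_sqrt_add_sqrt_add_one {A : ℝ} (hA : 0 < A) : 1 < √A + √(A + 1) := by
  have h₁ : 1 ≤ √(A + 1) := by rw [one_le_sqrt]; linarith
  linarith [sqrt_pos.2 hA]

lemma sqrt_add_sqrt_add_one_zpow_two_add_zpow_neg_two {A : ℝ} (hA : 0 ≤ A) :
    (√A + √(A + 1)) ^ (2 : ℤ) + (√A + √(A + 1)) ^ (-2 : ℤ) = 4 * A + 2 := by
  have hs := sq_sqrt hA
  have ht := sq_sqrt (by linarith : 0 ≤ A + 1)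
  have hinv : (√A + √(A + 1))⁻¹ = √(A + 1) - √A :=
    inv_eq_of_mul_eq_one_right (by linear_combination ht - hs)
  rw [zpow_neg, zpow_ofNat, ← inv_pow, hinv]
  linear_combination 2 * hs + 2 * ht

variable {N : ℕ}

lemma nuLM_eq_sqrt_add_sqrt_add_one (N l m : ℕ) :
    nuLM N l m = √(1 - cos (4 * π * l / N) / 2 - cos (4 * π * m / N) / 2) +
      √(1 - cos (4 * π * l / N) / 2 - cos (4 * π * m / N) / 2 + 1) := by
  rw [nuLM]
  ring_nf

lemma cos_four_pi_mul_div_lt_one (hN : Odd N) {l : ℕ} (hl : 0 < l) (hlN : l < N) :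
    cos (4 * π * l / N) < 1 := by
  refine (cos_le_one _).lt_of_ne fun h => ?_
  obtain ⟨k, hk⟩ := (cos_eq_one_iff _).1 h
  have hN0 : (N : ℝ) ≠ 0 := Nat.cast_ne_zero.2 hN.pos.ne'
  have hZ : ((2 * l : ℕ) : ℤ) = N * k := by
    have hR : ((2 * l : ℕ) : ℝ) = N * k := by
      push_cast
      field_simp at hk
      linarith [pi_pos]
    exact_mod_cast hR
  have hdvd : N ∣ 2 * l := Int.natCast_dvd_natCast.1 ⟨k, hZ⟩
  have := Nat.le_of_dvd hl ((Nat.Coprime.dvd_of_dvd_mul_left (Nat.coprime_two_right.2 hN)) hdvd)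
  omega

lemma one_lt_nuLM (hN : Odd N) {l : ℕ} (hl : 0 < l) (hlN : l < N) (m : ℕ) : 1 < nuLM N l m := by
  rw [nuLM_eq_sqrt_add_sqrt_add_one]
  refine one_lt_sqrt_add_sqrt_add_one ?_
  linarith [cos_four_pi_mul_div_lt_one hN hl hlN, cos_le_one (4 * π * m / N)]

lemma nuLM_zpow_two_add_zpow_neg_two (N l m : ℕ) :
    nuLM N l m ^ (2 : ℤ) + nuLM N l m ^ (-2 : ℤ) =
      6 - 2 * cos (4 * π * l / N) - 2 * cos (4 * π * m / N) := by
  rw [nuLM_eq_sqrt_add_sqrt_add_one, sqrt_add_sqrt_add_one_zpow_two_add_zpow_neg_two]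
  · ring
  · linarith [cos_le_one (4 * π * l / N), cos_le_one (4 * π * m / N)]

end Nu

section Profile

variable {ν : ℝ} {N : ℕ}

noncomputable def profile (ν : ℝ) (N k : ℕ) : ℝ :=
  (ν ^ k + ν ^ (N - k)) / (1 - ν ^ N) + ((-ν) ^ k + (-ν) ^ (N - k)) / (1 + ν ^ N)

noncomputable def profileInt (ν : ℝ) (N : ℕ) (k : ℤ) : ℝ :=
  (ν ^ k + ν ^ ((N : ℤ) - k)) / (1 - ν ^ N) + ((-ν) ^ k + (-ν) ^ ((N : ℤ) - k)) / (1 + ν ^ N)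

lemma profileInt_natCast {k : ℕ} (hk : k ≤ N) : profileInt ν N k = profile ν N k := by
  simp only [profileInt, profile, ← Nat.cast_sub hk, zpow_natCast]

lemma profileInt_add_two_add_profileInt_sub_two (hν : ν ≠ 0) (k : ℤ) :
    profileInt ν N (k + 2) + profileInt ν N (k - 2) =
      (ν ^ (2 : ℤ) + ν ^ (-2 : ℤ)) * profileInt ν N k := by
  have hν' : -ν ≠ 0 := neg_ne_zero.2 hν
  simp only [profileInt, show (N : ℤ) - (k + 2) = N - k - 2 by ring,
    show (N : ℤ) - (k - 2) = N - k + 2 by ring, zpow_add₀ hν, zpow_sub₀ hν, zpow_add₀ hν',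
    zpow_sub₀ hν', even_two.neg_zpow, zpow_neg]
  field_simp
  ring

-- The defect vanishes at `k = -1, 0, 1`; at `k = -2` it is the point source `2 (ν² - ν⁻²)`.
lemma profileInt_add_card (hν : ν ≠ 0) (hN : Odd N) (h₁ : 1 - ν ^ N ≠ 0) (h₂ : 1 + ν ^ N ≠ 0)
    (k : ℤ) :
    profileInt ν N (k + N) =
      profileInt ν N k + (ν ^ (-k) - ν ^ k) + ((-ν) ^ (-k) - (-ν) ^ k) := by
  have hν' : -ν ≠ 0 := neg_ne_zero.2 hν
  simp only [profileInt, show (N : ℤ) - (k + N) = -k by ring, zpow_add₀ hν, zpow_add₀ hν',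
    sub_eq_add_neg (N : ℤ), zpow_natCast, hN.neg_pow]
  field_simp
  ring

lemma profile_val_add_two (hN : 3 ≤ N) (hNodd : Odd N) (hν : ν ≠ 0) (h₁ : 1 - ν ^ N ≠ 0)
    (h₂ : 1 + ν ^ N ≠ 0) (z : ZMod N) :
    profile ν N (z + 2).val = profileInt ν N (z.val + 2) := by
  have : NeZero N := ⟨by omega⟩
  have hv2 : (2 : ZMod N).val = 2 := val_ofNat_of_lt hN
  rcases lt_or_ge (z.val + 2) N with h | h
  · rw [val_add_of_lt (hv2 ▸ h), hv2, ← profileInt_natCast (by omega)]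
    push_cast
    rfl
  · have hwrap := val_add_val_of_le (hv2.symm ▸ h : N ≤ z.val + (2 : ZMod N).val)
    rw [hv2] at hwrap
    have hz := z.val_lt
    rw [← profileInt_natCast (z + 2).val_lt.le,
      show (z.val : ℤ) + 2 = (z + 2).val + N by exact_mod_cast hwrap,
      profileInt_add_card hν hNodd h₁ h₂]
    obtain h0 | h1 : (z + 2).val = 0 ∨ (z + 2).val = 1 := by omega
    · simp [h0]
    · simp only [h1, Nat.cast_one, zpow_neg, zpow_one, inv_neg, sub_neg_eq_add]
      ring

lemma profile_val_sub_two (hN : 3 ≤ N) (hNodd : Odd N) (hν : ν ≠ 0) (h₁ : 1 - ν ^ N ≠ 0)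
    (h₂ : 1 + ν ^ N ≠ 0) (z : ZMod N) :
    profile ν N (z - 2).val =
      profileInt ν N (z.val - 2) + if z = 0 then 2 * (ν ^ (2 : ℤ) - ν ^ (-2 : ℤ)) else 0 := by
  have : NeZero N := ⟨by omega⟩
  have hv2 : (2 : ZMod N).val = 2 := val_ofNat_of_lt hN
  have hz : z = z - 2 + 2 := by ring
  rw [← profileInt_natCast (z - 2).val_lt.le]
  rcases lt_or_ge ((z - 2).val + 2) N with h | h
  · have hval : z.val = (z - 2).val + 2 := by rw [hz, val_add_of_lt (hv2 ▸ h), hv2]; simp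
    rw [if_neg fun h0 => by simp [h0] at hval, hval, add_zero]
    congr 1
    push_cast
    ring
  · have hwrap := val_add_val_of_le (hv2.symm ▸ h : N ≤ (z - 2).val + (2 : ZMod N).val)
    rw [hv2, ← hz] at hwrap
    have := (z - 2).val_lt
    rw [show ((z - 2).val : ℤ) = z.val - 2 + N by omega,
      profileInt_add_card hν hNodd h₁ h₂]
    obtain h0 | h1 : z.val = 0 ∨ z.val = 1 := by omega
    · rw [if_pos ((val_eq_zero z).1 h0), h0]
      simp only [CharP.cast_eq_zero, zero_sub, neg_neg, zpow_neg, even_two.neg_zpow]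
      ring
    · rw [if_neg fun h0 => by simp [h0] at h1, h1]
      simp only [Nat.cast_one, Int.reduceSub, neg_neg, zpow_neg, zpow_one, inv_neg, sub_neg_eq_add]
      ring

lemma profile_val_add_two_add_profile_val_sub_two (hN : 3 ≤ N) (hNodd : Odd N) (hν : 1 < ν)
    (z : ZMod N) :
    profile ν N (z + 2).val + profile ν N (z - 2).val =
      (ν ^ (2 : ℤ) + ν ^ (-2 : ℤ)) * profile ν N z.val +
        if z = 0 then 2 * (ν ^ (2 : ℤ) - ν ^ (-2 : ℤ)) else 0 := by
  have : NeZero N := ⟨by omega⟩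
  have hν₀ : ν ≠ 0 := by positivity
  have hνN : 1 < ν ^ N := one_lt_pow₀ hν (by omega)
  have h₁ : 1 - ν ^ N ≠ 0 := by linarith
  have h₂ : 1 + ν ^ N ≠ 0 := by linarith
  rw [profile_val_add_two hN hNodd hν₀ h₁ h₂, profile_val_sub_two hN hNodd hν₀ h₁ h₂,
    ← profileInt_natCast (N := N) z.val_lt.le, ← add_assoc,
    profileInt_add_two_add_profileInt_sub_two hν₀]

end Profile

section Laplacian

variable {N : ℕ}

lemma discLap_const_mul {R : Type*} [CommRing R] (c : R) (p : (Fin 3 → ZMod N) → R)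
    (a : Fin 3 → ZMod N) : discLap N (fun b => c * p b) a = c * discLap N p a := by
  simp only [discLap, ← mul_add, ← mul_sum]
  ring

lemma discLap_sum {R : Type*} [CommRing R] {ι : Type*} (s : Finset ι)
    (p : ι → (Fin 3 → ZMod N) → R) (a : Fin 3 → ZMod N) :
    discLap N (fun b => ∑ i ∈ s, p i b) a = ∑ i ∈ s, discLap N (p i) a := by
  simp only [discLap, ← sum_add_distrib, mul_sum]
  rw [sum_sub_distrib, sum_comm]

lemma discLap_of_coords {R : Type*} [CommRing R] (F : ZMod N → ZMod N → ZMod N → R)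
    (a : Fin 3 → ZMod N) :
    discLap N (fun b => F (b 0) (b 1) (b 2)) a =
      (F (a 0 + 2) (a 1) (a 2) + F (a 0 - 2) (a 1) (a 2)) +
        (F (a 0) (a 1 + 2) (a 2) + F (a 0) (a 1 - 2) (a 2)) +
        (F (a 0) (a 1) (a 2 + 2) + F (a 0) (a 1) (a 2 - 2)) - 6 * F (a 0) (a 1) (a 2) := by
  simp [discLap, Fin.sum_univ_three, Pi.single_apply, add_assoc]

noncomputable def poissonMode (N l m : ℕ) (a : Fin 3 → ZMod N) : ℝ :=
  tan (π * l / N) * planeWave N l m (a 0) (a 1) *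
    (1 / (nuLM N l m ^ (2 : ℤ) - nuLM N l m ^ (-2 : ℤ))) * profile (nuLM N l m) N (a 2).val

lemma discLap_poissonMode (hN : 3 ≤ N) (hNodd : Odd N) {l : ℕ} (hl : 0 < l) (hlN : l < N)
    (m : ℕ) (a : Fin 3 → ZMod N) :
    discLap N (poissonMode N l m) a =
      if a 2 = 0 then 2 * tan (π * l / N) * planeWave N l m (a 0) (a 1) else 0 := by
  have : NeZero N := ⟨by omega⟩
  have hν := one_lt_nuLM hNodd hl hlN m
  set ν := nuLM N l m
  have hW : 1 / (ν ^ (2 : ℤ) - ν ^ (-2 : ℤ)) * (ν ^ (2 : ℤ) - ν ^ (-2 : ℤ)) = 1 :=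
    one_div_mul_cancel (sub_ne_zero.2 ((zpow_right_strictMono₀ hν).injective.ne (by norm_num)))
  have hσ := nuLM_zpow_two_add_zpow_neg_two N l m
  have hx := planeWave_add_two_add_planeWave_sub_two_left l m (a 0) (a 1)
  have hy := planeWave_add_two_add_planeWave_sub_two_right l m (a 0) (a 1)
  have hz := profile_val_add_two_add_profile_val_sub_two hN hNodd hν (a 2)
  set T := tan (π * l / N)
  set W := 1 / (ν ^ (2 : ℤ) - ν ^ (-2 : ℤ))
  set S := planeWave N l m (a 0) (a 1)
  set G := profile ν N (a 2).val
  refine (discLap_of_coords (fun x y z => T * planeWave N l m x y * W * profile ν N z.val) a).trans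
    ?_
  split_ifs at hz ⊢
  · linear_combination
      T * W * G * (hx + hy) + T * W * S * hz + T * W * S * G * hσ + 2 * T * S * hW
  · linear_combination T * W * G * (hx + hy) + T * W * S * hz + T * W * S * G * hσ

end Laplacian

/-- Let `N ≥ 5` be odd.  The explicit function
`p(a) = (1/(4N²)) Σ_{l=1}^{N-1} Σ_{m=0}^{N-1} tan(πl/N) sin(2π(l a₁ + m a₂)/N)
  · (1/(ν² - ν⁻²)) · ((ν^{ā₃} + ν^{N-ā₃})/(1-ν^N) + ((-ν)^{ā₃} + (-ν)^{N-ā₃})/(1+ν^N))`,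
with `ν = ν_{l,m}`, solves the Poisson problem: `(Δp)(a) = (1/2)(-1)^{ā₁-1}` when
`ā₁ ≠ 0`, `ā₂ = 0`, `ā₃ = 0`, and `(Δp)(a) = 0` otherwise. -/
theorem discLap_poisson_solution
    (N : ℕ) (hN : 5 ≤ N) (hNodd : Odd N)
    (p : (Fin 3 → ZMod N) → ℝ)
    (hp : ∀ a : Fin 3 → ZMod N,
      p a = (1 / (4 * (N : ℝ) ^ 2)) *
        ∑ l ∈ Finset.Icc 1 (N - 1), ∑ m ∈ Finset.range N,
          Real.tan (Real.pi * l / N) *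
            Real.sin (2 * Real.pi * (l * (a 0).val + m * (a 1).val) / N) *
            (1 / (nuLM N l m ^ (2 : ℤ) - nuLM N l m ^ (-2 : ℤ))) *
            ((nuLM N l m ^ (a 2).val + nuLM N l m ^ (N - (a 2).val)) /
                (1 - nuLM N l m ^ N) +
              ((-nuLM N l m) ^ (a 2).val + (-nuLM N l m) ^ (N - (a 2).val)) /
                (1 + nuLM N l m ^ N))) :
    ∀ a : Fin 3 → ZMod N,
      discLap N p a =
        if (a 0).val ≠ 0 ∧ (a 1).val = 0 ∧ (a 2).val = 0 then
          (1 / 2 : ℝ) * (-1 : ℝ) ^ ((a 0).val - 1)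
        else 0 := by
  intro a
  have : NeZero N := ⟨by omega⟩
  have hp' : p = fun b => 1 / (4 * (N : ℝ) ^ 2) *
      ∑ l ∈ Icc 1 (N - 1), ∑ m ∈ range N, poissonMode N l m b := funext hp
  have hΔ : ∀ l ∈ Icc 1 (N - 1), ∀ m ∈ range N, discLap N (poissonMode N l m) a =
      if a 2 = 0 then 2 * tan (π * l / N) * planeWave N l m (a 0) (a 1) else 0 := by
    intro l hl m _
    rw [mem_Icc] at hl
    exact discLap_poissonMode (by omega) hNodd (by omega) (by omega) m a
  simp only [hp', discLap_const_mul, discLap_sum]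
  rw [sum_congr rfl fun l hl => sum_congr rfl (hΔ l hl)]
  rcases eq_or_ne (a 2) 0 with h2 | h2
  · simp only [h2, if_true, ← mul_sum, sum_range_planeWave]
    rcases eq_or_ne (a 1) 0 with h1 | h1
    · have hN0 : (N : ℝ) ≠ 0 := by positivity
      simp only [h1, if_true, val_zero, and_true]
      calc _ = 1 / (2 * N) *
              ∑ l ∈ Icc 1 (N - 1), tan (π * l / N) * sin (2 * π * (l * (a 0).val) / N) := by
            rw [mul_sum, mul_sum]
            refine sum_congr rfl fun _ _ => ?_
            field_simp
            ring
        _ = _ := by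
            rw [sum_Icc_tan_mul_sin hNodd (a 0).val_lt]
            rcases eq_or_ne (a 0).val 0 with hx | hx
            · simp [hx]
            · rw [if_neg hx, if_pos hx]
              field_simp
    · simp [h1]
  · simp [h2]
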